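/- arXiv:0905.2341 — 2 statements merged into one kernel-verified Lean document; each statement's English description precedes it below -/
import Mathlib

section
/- Let S be a smooth surface, P a point at which a curve C ⊂ S is smooth, and X, Y ⊂ S two curves such that no two of C, X, Y share an irreducible component through P. Then the intersection multiplicity at P satisfies m_P(X,Y) ≥ min{ m_P(C,X), m_P(C,Y) }. -/
open IsLocalRing Ideal

/-- Monotonicity of the lattice Krull dimension of quotients. -/
lemma IGM.len_antitone {A : Type*} [CommRing A] {I J : Ideal A} (h : I ≤ J) :
    Order.krullDim (Submodule A (A ⧸ J)) ≤ Order.krullDim (Submodule A (A ⧸ I)) := by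
  rw [Order.krullDim_eq_of_orderIso (Submodule.comapMkQRelIso J),
      Order.krullDim_eq_of_orderIso (Submodule.comapMkQRelIso I)]
  exact Order.krullDim_le_of_strictMono
    (fun q => ⟨q.1, le_trans h q.2⟩) (fun a b hab => hab)

/-- In a Noetherian local ring with principal maximal ideal, every nonzero element
is a unit times a power of the generator. -/
lemma IGM.unit_mul_pow {B : Type*} [CommRing B] [IsLocalRing B] [IsNoetherianRing B]
    (t : B) (ht : maximalIdeal B = Ideal.span {t}) (x : B) (hx : x ≠ 0) :
    ∃ (n : ℕ) (c : B), IsUnit c ∧ x = c * t ^ n := by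
  classical
  have hbot : (⨅ n : ℕ, maximalIdeal B ^ n) = ⊥ :=
    Ideal.iInf_pow_eq_bot_of_isLocalRing _ (Ideal.IsMaximal.ne_top inferInstance)
  have hex : ∃ n, x ∉ maximalIdeal B ^ n := by
    by_contra hc
    push_neg at hc
    have : x ∈ (⨅ n : ℕ, maximalIdeal B ^ n) := by simpa using hc
    rw [hbot] at this
    exact hx (by simpa using this)
  have hn0 : x ∉ maximalIdeal B ^ (Nat.find hex) := Nat.find_spec hex
  have hpos : Nat.find hex ≠ 0 := by
    intro h
    rw [h, pow_zero, Ideal.one_eq_top] at hn0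
    exact hn0 trivial
  obtain ⟨k, hk⟩ : ∃ k, Nat.find hex = k + 1 := ⟨Nat.find hex - 1, (Nat.succ_pred_eq_of_pos (Nat.pos_of_ne_zero hpos)).symm⟩
  have hxk : x ∈ maximalIdeal B ^ k := by
    by_contra hc
    exact absurd (Nat.find_min' hex hc) (by omega)
  rw [ht, Ideal.span_singleton_pow, Ideal.mem_span_singleton] at hxk
  obtain ⟨c, hc⟩ := hxk
  refine ⟨k, c, ?_, by rw [hc]; ring⟩
  by_contra hcu
  have hcm : c ∈ maximalIdeal B := (mem_maximalIdeal c).mpr hcu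
  rw [ht, Ideal.mem_span_singleton] at hcm
  obtain ⟨d, hd⟩ := hcm
  apply hn0
  rw [hk, ht, Ideal.span_singleton_pow, Ideal.mem_span_singleton]
  exact ⟨d, by rw [hc, hd]; ring⟩

/-- Comparability of principal ideals. -/
lemma IGM.span_comparable {B : Type*} [CommRing B] [IsLocalRing B] [IsNoetherianRing B]
    (t : B) (ht : maximalIdeal B = Ideal.span {t}) (x y : B) :
    x ∈ Ideal.span {y} ∨ y ∈ Ideal.span {x} := by
  by_cases hx : x = 0
  · exact Or.inl (hx ▸ zero_mem _)
  by_cases hy : y = 0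
  · exact Or.inr (hy ▸ zero_mem _)
  obtain ⟨a, c, hc, hxa⟩ := IGM.unit_mul_pow t ht x hx
  obtain ⟨b, d, hd, hyb⟩ := IGM.unit_mul_pow t ht y hy
  rcases le_total a b with hab | hab
  · right
    rw [Ideal.mem_span_singleton]
    obtain ⟨c', hc'⟩ := hc.exists_left_inv
    refine ⟨c' * d * t ^ (b - a), ?_⟩
    have h1 : c * t ^ a * (c' * d * t ^ (b - a)) = (c' * c) * (d * t ^ (a + (b - a))) := by
      ring
    rw [hxa, hyb, h1, hc', one_mul, Nat.add_sub_cancel' hab]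
  · left
    rw [Ideal.mem_span_singleton]
    obtain ⟨d', hd'⟩ := hd.exists_left_inv
    refine ⟨d' * c * t ^ (a - b), ?_⟩
    have h1 : d * t ^ b * (d' * c * t ^ (a - b)) = (d' * d) * (c * t ^ (b + (a - b))) := by
      ring
    rw [hxa, hyb, h1, hd', one_mul, Nat.add_sub_cancel' hab]

/-- Let `S` be a smooth surface, `P` a point at which a curve `C ⊂ S` is
smooth, and `X, Y ⊂ S` two curves such that no two of `C, X, Y` share an irreducible
component through `P`.  Then `m_P(X,Y) ≥ min { m_P(C,X), m_P(C,Y) }`.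

Formalized at the level of the regular two-dimensional local ring `A = O_{S,P}`: `C` smooth
at `P` means its local equation `v` is part of a regular system of parameters `(u, v)`
generating the maximal ideal; `φX, φY` are local equations of `X` and `Y`; "no common
component through `P`" means the pairs of local equations share no prime factor; and the
intersection multiplicity `m_P(X,Y)` is the length of `A/(φX, φY)`, expressed here as the
Krull dimension of its lattice of `A`-submodules. -/
theorem interMult_ge_min_of_smooth_curve {A : Type*} [CommRing A] [IsLocalRing A]
    [IsNoetherianRing A] (u v : A)
    (hmax : IsLocalRing.maximalIdeal A = Ideal.span {u, v})
    (hdim : ringKrullDim A = 2)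
    (φX φY : A)
    (hCX : ∀ p : A, Prime p → ¬ (p ∣ v ∧ p ∣ φX))
    (hCY : ∀ p : A, Prime p → ¬ (p ∣ v ∧ p ∣ φY))
    (hXY : ∀ p : A, Prime p → ¬ (p ∣ φX ∧ p ∣ φY)) :
    min (Order.krullDim (Submodule A (A ⧸ Ideal.span ({v, φX} : Set A))))
        (Order.krullDim (Submodule A (A ⧸ Ideal.span ({v, φY} : Set A)))) ≤
      Order.krullDim (Submodule A (A ⧸ Ideal.span ({φX, φY} : Set A))) := by
  set π : A →+* A ⧸ Ideal.span ({v} : Set A) := Ideal.Quotient.mk (Ideal.span {v}) with hπ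
  have hv_mem : v ∈ maximalIdeal A := by
    rw [hmax]; exact Ideal.subset_span (by simp)
  have hvne : (Ideal.span ({v} : Set A)) ≠ ⊤ := by
    intro h
    rw [Ideal.span_singleton_eq_top] at h
    exact (mem_maximalIdeal v).mp hv_mem h
  haveI : Nontrivial (A ⧸ Ideal.span ({v} : Set A)) := Ideal.Quotient.nontrivial_iff.mpr hvne
  haveI : IsLocalRing (A ⧸ Ideal.span ({v} : Set A)) :=
    IsLocalRing.of_surjective' π Ideal.Quotient.mk_surjective
  have hv0 : π v = 0 := Ideal.Quotient.eq_zero_iff_mem.mpr (Ideal.subset_span rfl)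
  have hmB : maximalIdeal (A ⧸ Ideal.span ({v} : Set A)) = Ideal.span {π u} := by
    apply le_antisymm
    · intro b hb
      obtain ⟨a, rfl⟩ := Ideal.Quotient.mk_surjective b
      by_cases ha : a ∈ maximalIdeal A
      · rw [hmax, Ideal.mem_span_pair] at ha
        obtain ⟨c, d, hcd⟩ := ha
        rw [Ideal.mem_span_singleton]
        exact ⟨π c, by
          simp only [← hcd, map_add, _root_.map_mul, ← hπ, hv0, mul_zero, add_zero]
          ring⟩
      · exfalso
        have hu : IsUnit a := by
          by_contra hna
          exact ha ((mem_maximalIdeal a).mpr (mem_nonunits_iff.mpr hna))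
        exact mem_nonunits_iff.mp ((mem_maximalIdeal _).mp hb) (hu.map π)
    · rw [Ideal.span_le, Set.singleton_subset_iff]
      show π u ∈ maximalIdeal _
      rw [mem_maximalIdeal, mem_nonunits_iff]
      intro hu
      obtain ⟨z, hz⟩ := hu.exists_right_inv
      obtain ⟨c, rfl⟩ := Ideal.Quotient.mk_surjective z
      have : u * c - 1 ∈ Ideal.span ({v} : Set A) := by
        rw [← Ideal.Quotient.eq_zero_iff_mem, map_sub, _root_.map_mul, map_one, hz, sub_self]
      rw [Ideal.mem_span_singleton] at this
      obtain ⟨e, he⟩ := this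
      have h1 : (1 : A) ∈ maximalIdeal A := by
        rw [hmax, Ideal.mem_span_pair]
        exact ⟨c, -e, by linear_combination he⟩
      exact mem_nonunits_iff.mp ((mem_maximalIdeal 1).mp h1) isUnit_one
  rcases IGM.span_comparable (π u) hmB (π φX) (π φY) with h | h
  · -- π φX ∈ (π φY) : φX ∈ (v, φY)
    rw [Ideal.mem_span_singleton] at h
    obtain ⟨z, hz⟩ := h
    obtain ⟨c, rfl⟩ := Ideal.Quotient.mk_surjective z
    have hmem : φX ∈ Ideal.span ({v, φY} : Set A) := by
      have : φX - φY * c ∈ Ideal.span ({v} : Set A) := by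
        rw [← Ideal.Quotient.eq_zero_iff_mem, map_sub, _root_.map_mul, hz, sub_self]
      rw [Ideal.mem_span_singleton] at this
      obtain ⟨e, he⟩ := this
      rw [Ideal.mem_span_pair]
      exact ⟨e, c, by linear_combination -he⟩
    refine le_trans (min_le_right _ _) (IGM.len_antitone ?_)
    rw [Ideal.span_le]
    rintro x (rfl | rfl)
    · exact hmem
    · exact Ideal.subset_span (by simp)
  · -- π φY ∈ (π φX) : φY ∈ (v, φX)
    rw [Ideal.mem_span_singleton] at h
    obtain ⟨z, hz⟩ := h
    obtain ⟨c, rfl⟩ := Ideal.Quotient.mk_surjective z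
    have hmem : φY ∈ Ideal.span ({v, φX} : Set A) := by
      have : φY - φX * c ∈ Ideal.span ({v} : Set A) := by
        rw [← Ideal.Quotient.eq_zero_iff_mem, map_sub, _root_.map_mul, hz, sub_self]
      rw [Ideal.mem_span_singleton] at this
      obtain ⟨e, he⟩ := this
      rw [Ideal.mem_span_pair]
      exact ⟨e, c, by linear_combination -he⟩
    refine le_trans (min_le_left _ _) (IGM.len_antitone ?_)
    rw [Ideal.span_le]
    rintro x (rfl | rfl)
    · exact Ideal.subset_span (by simp)
    · exact hmem
end

section
/- Let S ⊂ P³ be a smooth quadric surface over F_q, H_S the tangent hyperplane section at a rational point, G = mH_S with 1 ≤ m ≤ q−2, and Δ the sum of the q² rational points of the affine chart S ∖ H_S. If S is hyperbolic (contains two families of rational lines), then the minimum distance of the dual code C_L(Δ, G)^⊥ is at most m+2. -/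
open Polynomial Lagrange Finset

lemma basis_coeff_card_sub_one {F : Type*} [Field F] [DecidableEq F] (s : Finset F) {i : F} (hi : i ∈ s) :
    (Lagrange.basis s id i).coeff (#s - 1) = nodalWeight s id i := by
  have hinj : Set.InjOn id (s : Set F) := Function.injective_id.injOn
  have hd := Lagrange.degree_basis hinj hi
  have hnd : (Lagrange.basis s id i).natDegree = #s - 1 :=
    natDegree_eq_of_degree_eq_some hd
  rw [← hnd, ← Polynomial.leadingCoeff, Lagrange.basis, leadingCoeff_prod, nodalWeight]
  refine Finset.prod_congr rfl fun j hj => ?_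
  have hne : (id i : F) ≠ id j := fun h => (Finset.mem_erase.mp hj).1 (hinj (Finset.mem_erase.mp hj).2 hi h.symm)
  rw [Lagrange.basisDivisor, leadingCoeff_mul, leadingCoeff_C, (monic_X_sub_C _).leadingCoeff, mul_one]

lemma key_identity {F : Type*} [Field F] [DecidableEq F] (s : Finset F) (k : ℕ) (hk : k + 2 ≤ #s) :
    ∑ x ∈ s, x ^ k * nodalWeight s id x = 0 := by
  have hinj : Set.InjOn id (s : Set F) := Function.injective_id.injOn
  have h1 : (X ^ k : F[X]) = interpolate s id (fun x => x ^ k) := by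
    have := eq_interpolate (f := (X ^ k : F[X])) hinj (by
      rw [degree_X_pow]; exact_mod_cast (by omega : k < #s))
    simpa using this
  have h2 := congrArg (fun p : F[X] => p.coeff (#s - 1)) h1
  simp only [interpolate_apply, finset_sum_coeff, coeff_C_mul, coeff_X_pow] at h2
  rw [if_neg (by omega)] at h2
  rw [← h2.symm]
  refine (Finset.sum_congr rfl fun x hx => ?_).symm
  rw [basis_coeff_card_sub_one s hx]



/-- The dual code of a linear code `C ⊆ F^ι` with respect to the canonical pairing
`⟨x, y⟩ = ∑ i, x i * y i`. -/
def dualCode {F : Type*} [Field F] {ι : Type*} [Fintype ι]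
    (C : Submodule F (ι → F)) : Submodule F (ι → F) where
  carrier := {y | ∀ x ∈ C, ∑ i, x i * y i = 0}
  zero_mem' := by intro x _; simp
  add_mem' := by
    intro a b ha hb x hx
    simp only [Set.mem_setOf_eq] at *
    simp [Pi.add_apply, mul_add, Finset.sum_add_distrib, ha x hx, hb x hx]
  smul_mem' := by
    intro c a ha x hx
    simp only [Set.mem_setOf_eq] at *
    have h2 : ∑ i, x i * (c • a) i = c * ∑ i, x i * a i := by
      rw [Finset.mul_sum]
      exact Finset.sum_congr rfl (fun i _ => by simp [Pi.smul_apply, smul_eq_mul]; ring)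
    rw [h2, ha x hx, mul_zero]

/-- The rational points of the affine chart `S ∖ H_S` of the standard hyperbolic quadric
`S = {X₀X₃ = X₁X₂} ⊂ P³`, where `H_S = S ∩ {X₃ = 0}` is the tangent plane section at the
rational point `(1:0:0:0)`: the point of `S` with `X₃ = 1` attached to `(y, z) ∈ F²` is
`(yz : y : z : 1)`. -/
def hyperbolicChartPoint {F : Type*} [Field F] (p : F × F) : Fin 4 → F :=
  ![p.1 * p.2, p.1, p.2, 1]

/-- The functional code `C_L(Δ, mH_S)` on the hyperbolic quadric: evaluation of the global
sections of `O_S(m)` (restrictions of homogeneous forms of degree `m` in four variables)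
at the `q²` rational points of the affine chart `S ∖ H_S`. -/
noncomputable def hyperbolicQuadricCode (F : Type*) [Field F] [Fintype F] (m : ℕ) :
    Submodule F ((F × F) → F) :=
  (MvPolynomial.homogeneousSubmodule (Fin 4) F m).map
    (LinearMap.pi fun p : F × F => (MvPolynomial.aeval (hyperbolicChartPoint p)).toLinearMap)

/-- Let `S ⊂ P³` be a smooth hyperbolic quadric over `F_q`, `H_S` the
tangent hyperplane section at a rational point, `G = mH_S` with `1 ≤ m ≤ q − 2`, and `Δ`
the sum of the `q²` rational points of `S ∖ H_S`.  Then the minimum distance of the dual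
code `C_L(Δ, G)^⊥` is at most `m + 2`. -/
theorem dual_minDist_hyperbolic_quadric_le (F : Type*) [Field F] [Fintype F] [DecidableEq F]
    (m : ℕ) (hm1 : 1 ≤ m) (hm2 : m ≤ Fintype.card F - 2) :
    sInf {w : ℕ | ∃ c ∈ dualCode (hyperbolicQuadricCode F m), c ≠ 0 ∧ hammingNorm c = w}
      ≤ m + 2 := by
  classical
  have hcard : m + 2 ≤ Fintype.card F := by
    have h2 : 2 ≤ Fintype.card F := by
      by_contra h
      interval_cases h' : Fintype.card F <;> omega
    omega
  obtain ⟨s, -, hs⟩ := Finset.exists_subset_card_eq (s := (Finset.univ : Finset F))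
      (by simpa using hcard)
  set c : F × F → F := fun p => if p.1 = 0 ∧ p.2 ∈ s then Lagrange.nodalWeight s id p.2 else 0
    with hc
  have hinj : Set.InjOn id (s : Set F) := Function.injective_id.injOn
  have hsne : s.Nonempty := Finset.card_pos.mp (by omega)
  obtain ⟨z₀, hz₀⟩ := hsne
  have hcne : c ≠ 0 := by
    intro h
    have h0 : Lagrange.nodalWeight s id z₀ = 0 := by
      have h1 := congrFun h (0, z₀)
      simpa [hc, hz₀] using h1
    exact Lagrange.nodalWeight_ne_zero hinj hz₀ h0
  have hnorm : hammingNorm c ≤ m + 2 := by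
    have hsub : ({p | c p ≠ 0} : Finset (F × F)) ⊆ s.image (fun z => ((0 : F), z)) := by
      intro p hp
      simp only [Finset.mem_filter, Finset.mem_univ, true_and, hc, Set.mem_setOf_eq] at hp
      rcases p with ⟨y, z⟩
      by_cases h : y = 0 ∧ z ∈ s
      · simp only [Finset.mem_image]
        exact ⟨z, h.2, by rw [h.1]⟩
      · rw [if_neg h] at hp; exact absurd rfl hp
    calc hammingNorm c ≤ (s.image (fun z => ((0 : F), z))).card := Finset.card_le_card hsub
      _ ≤ s.card := Finset.card_image_le
      _ = m + 2 := hs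
  have hmem : c ∈ dualCode (hyperbolicQuadricCode F m) := by
    intro x hx
    obtain ⟨f, hf, rfl⟩ := hx
    replace hf : MvPolynomial.IsHomogeneous f m := hf
    have step1 : ∑ p : F × F,
        (LinearMap.pi fun p : F × F =>
          (MvPolynomial.aeval (hyperbolicChartPoint p)).toLinearMap) f p * c p
        = ∑ z ∈ s, MvPolynomial.aeval (hyperbolicChartPoint ((0 : F), z)) f
            * Lagrange.nodalWeight s id z := by
      simp only [LinearMap.pi_apply, AlgHom.toLinearMap_apply]
      rw [Fintype.sum_prod_type]
      rw [Finset.sum_eq_single 0]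
      · rw [← Finset.sum_subset (Finset.subset_univ s)]
        · exact Finset.sum_congr rfl fun z hz => by simp [hc, hz]
        · intro z _ hz
          simp [hc, hz]
      · intro y _ hy
        apply Finset.sum_eq_zero
        intro z _
        simp [hc, hy]
      · simp
    rw [step1]
    have heval : ∀ z : F, MvPolynomial.aeval (hyperbolicChartPoint ((0 : F), z)) f
        = ∑ d ∈ f.support, MvPolynomial.coeff d f
            * ((0:F) ^ d 0 * (0:F) ^ d 1 * z ^ d 2 * 1 ^ d 3) := by
      intro z
      rw [MvPolynomial.aeval_def, MvPolynomial.eval₂_eq']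
      refine Finset.sum_congr rfl fun d _ => ?_
      rw [Fin.prod_univ_four]
      simp [hyperbolicChartPoint]
    calc ∑ z ∈ s, MvPolynomial.aeval (hyperbolicChartPoint ((0 : F), z)) f
            * Lagrange.nodalWeight s id z
        = ∑ z ∈ s, ∑ d ∈ f.support, MvPolynomial.coeff d f
            * ((0:F) ^ d 0 * (0:F) ^ d 1 * 1 ^ d 3)
            * (z ^ d 2 * Lagrange.nodalWeight s id z) := by
          refine Finset.sum_congr rfl fun z _ => ?_
          rw [heval z, Finset.sum_mul]
          exact Finset.sum_congr rfl fun d _ => by ring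
      _ = ∑ d ∈ f.support, MvPolynomial.coeff d f
            * ((0:F) ^ d 0 * (0:F) ^ d 1 * 1 ^ d 3)
            * ∑ z ∈ s, z ^ d 2 * Lagrange.nodalWeight s id z := by
          rw [Finset.sum_comm]
          exact Finset.sum_congr rfl fun d _ => by rw [Finset.mul_sum]
      _ = 0 := by
          apply Finset.sum_eq_zero
          intro d hd
          rw [key_identity s (d 2) ?_, mul_zero]
          have hsum := hf (MvPolynomial.mem_support_iff.mp hd)
          have hdm : d 2 ≤ m := by
            have hle := Finsupp.le_degree (2 : Fin 4) d
            rw [Finsupp.degree_eq_weight_one] at hle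
            exact hle.trans (le_of_eq hsum)
          omega
  exact le_trans (Nat.sInf_le ⟨c, hmem, hcne, rfl⟩) hnorm
end
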